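/- Let R be a commutative ring in which 2 = 0, and let C_{i,j} for i ∈ {0,1,2}, j ∈ {0,1} be R-modules equipped with R-linear maps: differentials ∂_{i,j} : C_{i,j} → C_{i,j} with ∂_{i,j} ∘ ∂_{i,j} = 0; horizontal edge maps e_{i,j} : C_{i,j} → C_{i+1,j} for i ∈ {0,1} satisfying ∂_{i+1,j} ∘ e_{i,j} + e_{i,j} ∘ ∂_{i,j} = 0; vertical edge maps g_i : C_{i,0} → C_{i,1} for i ∈ {0,1,2} satisfying ∂_{i,1} ∘ g_i + g_i ∘ ∂_{i,0} = 0; and diagonal maps h_i : C_{i,0} → C_{i+1,1} for i ∈ {0,1} satisfying ∂_{i+1,1} ∘ h_i + h_i ∘ ∂_{i,0} + g_{i+1} ∘ e_{i,0} + e_{i,1} ∘ g_i = 0. Then the map H := e_{1,1} ∘ h_0 + h_1 ∘ e_{0,0} : C_{0,0} → C_{2,1} satisfies ∂_{2,1} ∘ H + H ∘ ∂_{0,0} + g_2 ∘ (e_{1,0} ∘ e_{0,0}) + (e_{1,1} ∘ e_{0,1}) ∘ g_0 = 0. In other words, compressing a size-(2,1) hyperbox of chain complexes by taking the corner complexes C_{0,0},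 C_{2,0}, C_{0,1}, C_{2,1}, the composed horizontal edges e_{1,0} ∘ e_{0,0} and e_{1,1} ∘ e_{0,1}, the vertical edges g_0 and g_2, and the diagonal H yields a hypercube of chain complexes. -/

import Mathlib

/-!
Post-composing the relation of the left square with `e₁₁` and pre-composing the relation of the
right square with `e₀₀` produces every term of the compressed relation, except that `∂₂₁ ∘ e₁₁ ∘ h₀`
and `h₁ ∘ e₀₀ ∘ ∂₀₀` appear with `e₁₁` resp. `e₀₀` commuted past the differential, and the middle
term `e₁₁ ∘ g₁ ∘ e₀₀` appears twice. The chain-map relations of `e₁₁` and `e₀₀` repair the former,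
and `2 = 0` removes the latter.
-/

section CompressHyperbox

variable {R : Type*} [CommRing R] {C00 C10 C20 C01 C11 C21 : Type*}
  [AddCommGroup C00] [Module R C00] [AddCommGroup C10] [Module R C10]
  [AddCommGroup C20] [Module R C20] [AddCommGroup C01] [Module R C01]
  [AddCommGroup C11] [Module R C11] [AddCommGroup C21] [Module R C21]

-- Valid over any ring: the doubled terms are moved to the left so that no subtraction occurs.
theorem compressed_square_relation_add_two_smul
    (d00 : C00 →ₗ[R] C00) (d10 : C10 →ₗ[R] C10) (d11 : C11 →ₗ[R] C11) (d21 : C21 →ₗ[R] C21)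
    (e00 : C00 →ₗ[R] C10) (e10 : C10 →ₗ[R] C20) (e01 : C01 →ₗ[R] C11) (e11 : C11 →ₗ[R] C21)
    (g0 : C00 →ₗ[R] C01) (g1 : C10 →ₗ[R] C11) (g2 : C20 →ₗ[R] C21)
    (h0 : C00 →ₗ[R] C11) (h1 : C10 →ₗ[R] C21) :
    d21 ∘ₗ (e11 ∘ₗ h0 + h1 ∘ₗ e00) + (e11 ∘ₗ h0 + h1 ∘ₗ e00) ∘ₗ d00
        + g2 ∘ₗ (e10 ∘ₗ e00) + (e11 ∘ₗ e01) ∘ₗ g0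
      + (2 : R) • (e11 ∘ₗ d11 ∘ₗ h0 + h1 ∘ₗ d10 ∘ₗ e00 + e11 ∘ₗ g1 ∘ₗ e00)
      = e11 ∘ₗ (d11 ∘ₗ h0 + h0 ∘ₗ d00 + g1 ∘ₗ e00 + e01 ∘ₗ g0)
        + (d21 ∘ₗ h1 + h1 ∘ₗ d10 + g2 ∘ₗ e10 + e11 ∘ₗ g1) ∘ₗ e00
        + (d21 ∘ₗ e11 + e11 ∘ₗ d11) ∘ₗ h0 + h1 ∘ₗ (d10 ∘ₗ e00 + e00 ∘ₗ d00) := by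
  simp only [two_smul, LinearMap.comp_add, LinearMap.add_comp, LinearMap.comp_assoc]
  abel

end CompressHyperbox

theorem compress_hyperbox_two_one_general
    (R : Type*) [CommRing R] (h2 : (2 : R) = 0)
    (C00 C10 C20 C01 C11 C21 : Type*)
    [AddCommGroup C00] [Module R C00] [AddCommGroup C10] [Module R C10]
    [AddCommGroup C20] [Module R C20] [AddCommGroup C01] [Module R C01]
    [AddCommGroup C11] [Module R C11] [AddCommGroup C21] [Module R C21]
    -- differentials
    (d00 : C00 →ₗ[R] C00) (d10 : C10 →ₗ[R] C10)
    (d11 : C11 →ₗ[R] C11) (d21 : C21 →ₗ[R] C21)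
    -- horizontal edge maps
    (e00 : C00 →ₗ[R] C10) (e10 : C10 →ₗ[R] C20)
    (e01 : C01 →ₗ[R] C11) (e11 : C11 →ₗ[R] C21)
    (he00 : d10 ∘ₗ e00 + e00 ∘ₗ d00 = 0)
    (he11 : d21 ∘ₗ e11 + e11 ∘ₗ d11 = 0)
    -- vertical edge maps
    (g0 : C00 →ₗ[R] C01) (g1 : C10 →ₗ[R] C11) (g2 : C20 →ₗ[R] C21)
    -- diagonal homotopies on the two unit squares
    (h0 : C00 →ₗ[R] C11) (h1 : C10 →ₗ[R] C21)
    (hh0 : d11 ∘ₗ h0 + h0 ∘ₗ d00 + g1 ∘ₗ e00 + e01 ∘ₗ g0 = 0)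
    (hh1 : d21 ∘ₗ h1 + h1 ∘ₗ d10 + g2 ∘ₗ e10 + e11 ∘ₗ g1 = 0) :
    d21 ∘ₗ (e11 ∘ₗ h0 + h1 ∘ₗ e00) + (e11 ∘ₗ h0 + h1 ∘ₗ e00) ∘ₗ d00
        + g2 ∘ₗ (e10 ∘ₗ e00) + (e11 ∘ₗ e01) ∘ₗ g0 = 0 := by
  have key := compressed_square_relation_add_two_smul d00 d10 d11 d21 e00 e10 e01 e11 g0 g1 g2 h0 h1
  simpa [h2, hh0, hh1, he00, he11] using key

/-- Compression of a size-(2,1) hyperbox of chain complexes over a ring with `2 = 0`: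
given chain complexes `C i j` (`i ∈ {0,1,2}`, `j ∈ {0,1}`) with differentials `∂ij`,
horizontal chain maps `e`, vertical chain maps `g`, and diagonal chain homotopies `h`
satisfying the hyperbox relations, the map `H = e₁₁ ∘ h₀ + h₁ ∘ e₀₀` is a chain
homotopy for the hypercube obtained by compressing: it satisfies
`∂₂₁ ∘ H + H ∘ ∂₀₀ + g₂ ∘ (e₁₀ ∘ e₀₀) + (e₁₁ ∘ e₀₁) ∘ g₀ = 0`. -/
theorem compress_hyperbox_two_one
    (R : Type*) [CommRing R] (h2 : (2 : R) = 0)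
    (C00 C10 C20 C01 C11 C21 : Type*)
    [AddCommGroup C00] [Module R C00] [AddCommGroup C10] [Module R C10]
    [AddCommGroup C20] [Module R C20] [AddCommGroup C01] [Module R C01]
    [AddCommGroup C11] [Module R C11] [AddCommGroup C21] [Module R C21]
    -- differentials
    (d00 : C00 →ₗ[R] C00) (d10 : C10 →ₗ[R] C10) (d20 : C20 →ₗ[R] C20)
    (d01 : C01 →ₗ[R] C01) (d11 : C11 →ₗ[R] C11) (d21 : C21 →ₗ[R] C21)
    (hd00 : d00 ∘ₗ d00 = 0) (hd10 : d10 ∘ₗ d10 = 0) (hd20 : d20 ∘ₗ d20 = 0)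
    (hd01 : d01 ∘ₗ d01 = 0) (hd11 : d11 ∘ₗ d11 = 0) (hd21 : d21 ∘ₗ d21 = 0)
    -- horizontal edge maps
    (e00 : C00 →ₗ[R] C10) (e10 : C10 →ₗ[R] C20)
    (e01 : C01 →ₗ[R] C11) (e11 : C11 →ₗ[R] C21)
    (he00 : d10 ∘ₗ e00 + e00 ∘ₗ d00 = 0) (he10 : d20 ∘ₗ e10 + e10 ∘ₗ d10 = 0)
    (he01 : d11 ∘ₗ e01 + e01 ∘ₗ d01 = 0) (he11 : d21 ∘ₗ e11 + e11 ∘ₗ d11 = 0)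
    -- vertical edge maps
    (g0 : C00 →ₗ[R] C01) (g1 : C10 →ₗ[R] C11) (g2 : C20 →ₗ[R] C21)
    (hg0 : d01 ∘ₗ g0 + g0 ∘ₗ d00 = 0) (hg1 : d11 ∘ₗ g1 + g1 ∘ₗ d10 = 0)
    (hg2 : d21 ∘ₗ g2 + g2 ∘ₗ d20 = 0)
    -- diagonal homotopies on the two unit squares
    (h0 : C00 →ₗ[R] C11) (h1 : C10 →ₗ[R] C21)
    (hh0 : d11 ∘ₗ h0 + h0 ∘ₗ d00 + g1 ∘ₗ e00 + e01 ∘ₗ g0 = 0)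
    (hh1 : d21 ∘ₗ h1 + h1 ∘ₗ d10 + g2 ∘ₗ e10 + e11 ∘ₗ g1 = 0) :
    d21 ∘ₗ (e11 ∘ₗ h0 + h1 ∘ₗ e00) + (e11 ∘ₗ h0 + h1 ∘ₗ e00) ∘ₗ d00
        + g2 ∘ₗ (e10 ∘ₗ e00) + (e11 ∘ₗ e01) ∘ₗ g0 = 0 :=
  compress_hyperbox_two_one_general R h2 C00 C10 C20 C01 C11 C21 d00 d10 d11 d21 e00 e10 e01 e11
    he00 he11 g0 g1 g2 h0 h1 hh0 hh1
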